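/- arXiv:2308.03859 — 2 statements merged into one kernel-verified Lean document; each statement's English description precedes it below -/
import Mathlib

section
/- For a connected graph G = (V,E) and a fixed vertex q, the number of two-forests satisfies κ₂(G) = Σ_{v∈V} κ₂(v|q) − Σ_{e∈E} κ₃(e⁺|e⁻|q). -/
open scoped Classical
open Matrix

/-- A finite multigraph without loop edges, given by endpoint maps on an edge type. -/
structure Multigraph where
  V : Type
  E : Type
  [fintV : Fintype V]
  [fintE : Fintype E]
  fst : E → V
  snd : E → V
  no_loop : ∀ e, fst e ≠ snd e

namespace Multigraph

variable (G : Multigraph)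

instance : Fintype G.V := G.fintV
instance : Fintype G.E := G.fintE

/-- One step along an edge of the subgraph with edge set `S`. -/
def step (S : Finset G.E) (u v : G.V) : Prop :=
  ∃ e ∈ S, (G.fst e = u ∧ G.snd e = v) ∨ (G.fst e = v ∧ G.snd e = u)

/-- Two vertices are in the same component of the spanning subgraph with edge set `S`. -/
def reach (S : Finset G.E) : G.V → G.V → Prop :=
  Relation.EqvGen (G.step S)

/-- Number of connected components of the spanning subgraph with edge set `S`. -/
noncomputable def ncomp (S : Finset G.E) : ℕ :=
  Nat.card (Quotient (Relation.EqvGen.setoid (G.step S)))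

/-- The graph is connected. -/
def IsConnected : Prop := G.ncomp Finset.univ = 1

/-- `S` is the edge set of a spanning tree. -/
def IsSpanningTree (S : Finset G.E) : Prop :=
  G.ncomp S = 1 ∧ S.card + 1 = Fintype.card G.V

/-- `S` is the edge set of a two-component spanning forest. -/
def IsTwoForest (S : Finset G.E) : Prop :=
  G.ncomp S = 2 ∧ S.card + 2 = Fintype.card G.V

/-- `S` is the edge set of a three-component spanning forest. -/
def IsThreeForest (S : Finset G.E) : Prop :=
  G.ncomp S = 3 ∧ S.card + 3 = Fintype.card G.V

/-- κ(G): number of spanning trees. -/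
noncomputable def kappa : ℕ := Nat.card {S : Finset G.E // G.IsSpanningTree S}

/-- κ₂(G): number of two-component spanning forests. -/
noncomputable def kappa2 : ℕ := Nat.card {S : Finset G.E // G.IsTwoForest S}

/-- κ₂(x|y): number of two-forests with `x` and `y` in different components. -/
noncomputable def kappa2Sep (x y : G.V) : ℕ :=
  Nat.card {S : Finset G.E // G.IsTwoForest S ∧ ¬ G.reach S x y}

/-- κ₂(xy|q): number of two-forests with `x`, `y` in one component, `q` in the other. -/
noncomputable def kappa2Tog (x y q : G.V) : ℕ :=
  Nat.card {S : Finset G.E // G.IsTwoForest S ∧ G.reach S x y ∧ ¬ G.reach S x q}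

/-- κ₃(x|y|q): number of three-forests with `x`, `y`, `q` in pairwise distinct components. -/
noncomputable def kappa3Sep (x y q : G.V) : ℕ :=
  Nat.card {S : Finset G.E //
    G.IsThreeForest S ∧ ¬ G.reach S x y ∧ ¬ G.reach S x q ∧ ¬ G.reach S y q}

/-- Effective resistance: r(x,y) = κ₂(x|y)/κ(G). -/
noncomputable def res (x y : G.V) : ℝ := (G.kappa2Sep x y : ℝ) / (G.kappa : ℝ)

/-- Potential kernel: j_q(x,y) = κ₂(xy|q)/κ(G). -/
noncomputable def jfun (q x y : G.V) : ℝ := (G.kappa2Tog x y q : ℝ) / (G.kappa : ℝ)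

/-- Cut size |∂F| of a two-forest with edge set `S`: edges joining the two components. -/
noncomputable def cutSize (S : Finset G.E) : ℕ :=
  Nat.card {e : G.E // ¬ G.reach S (G.fst e) (G.snd e)}

/-- The curvature vector μ. -/
noncomputable def mu (x : G.V) : ℝ :=
  1 - (1/2) * ∑ e : G.E,
    (if G.fst e = x ∨ G.snd e = x then G.res (G.fst e) (G.snd e) else 0)

/-- The Laplacian matrix of `G`. -/
noncomputable def lap : Matrix G.V G.V ℝ := fun v w =>
  (if v = w then (Nat.card {e : G.E // G.fst e = v ∨ G.snd e = v} : ℝ) else 0)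
    - (Nat.card {e : G.E // (G.fst e = v ∧ G.snd e = w) ∨ (G.fst e = w ∧ G.snd e = v)} : ℝ)

/-- The effective resistance matrix of `G`. -/
noncomputable def resMatrix : Matrix G.V G.V ℝ := fun v w => G.res v w

end Multigraph

namespace Multigraph

variable {G : Multigraph}

lemma reach_refl (S : Finset G.E) (x : G.V) : G.reach S x x := Relation.EqvGen.refl x

lemma reach_symm {S : Finset G.E} {x y : G.V} (h : G.reach S x y) : G.reach S y x :=
  Relation.EqvGen.symm _ _ h

lemma reach_trans {S : Finset G.E} {x y z : G.V} (h1 : G.reach S x y) (h2 : G.reach S y z) :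
    G.reach S x z := Relation.EqvGen.trans _ _ _ h1 h2

lemma reach_mono {S T : Finset G.E} (hST : S ⊆ T) {x y : G.V} (h : G.reach S x y) :
    G.reach T x y := by
  refine Relation.EqvGen.mono (fun u v huv => ?_) _ _ h
  obtain ⟨e, he, hor⟩ := huv
  exact ⟨e, hST he, hor⟩

lemma reach_of_mem {S : Finset G.E} {e : G.E} (he : e ∈ S) :
    G.reach S (G.fst e) (G.snd e) :=
  Relation.EqvGen.rel _ _ ⟨e, he, Or.inl ⟨rfl, rfl⟩⟩

lemma reach_empty_iff (x y : G.V) : G.reach ∅ x y ↔ x = y := by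
  constructor
  · intro h
    induction h with
    | rel u v huv => obtain ⟨f, hf, _⟩ := huv; exact absurd hf (Finset.notMem_empty f)
    | refl u => rfl
    | symm u v _ ih => exact ih.symm
    | trans u v w _ _ ih1 ih2 => exact ih1.trans ih2
  · rintro rfl; exact reach_refl _ _

lemma reach_insert_iff (S : Finset G.E) (e : G.E) (x y : G.V) :
    G.reach (insert e S) x y ↔
      G.reach S x y ∨ (G.reach S x (G.fst e) ∧ G.reach S (G.snd e) y) ∨
        (G.reach S x (G.snd e) ∧ G.reach S (G.fst e) y) := by
  constructor
  · intro h
    induction h with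
    | rel u v huv =>
      obtain ⟨f, hf, hor⟩ := huv
      rcases Finset.mem_insert.1 hf with rfl | hf
      · rcases hor with ⟨rfl, rfl⟩ | ⟨rfl, rfl⟩
        · exact Or.inr (Or.inl ⟨reach_refl _ _, reach_refl _ _⟩)
        · exact Or.inr (Or.inr ⟨reach_refl _ _, reach_refl _ _⟩)
      · exact Or.inl (Relation.EqvGen.rel _ _ ⟨f, hf, hor⟩)
    | refl u => exact Or.inl (reach_refl _ _)
    | symm u v _ ih =>
      rcases ih with h | ⟨h1, h2⟩ | ⟨h1, h2⟩
      · exact Or.inl (reach_symm h)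
      · exact Or.inr (Or.inr ⟨reach_symm h2, reach_symm h1⟩)
      · exact Or.inr (Or.inl ⟨reach_symm h2, reach_symm h1⟩)
    | trans u v w _ _ ih1 ih2 =>
      rcases ih1 with h | ⟨h1, h2⟩ | ⟨h1, h2⟩ <;> rcases ih2 with h' | ⟨h1', h2'⟩ | ⟨h1', h2'⟩
      · exact Or.inl (reach_trans h h')
      · exact Or.inr (Or.inl ⟨reach_trans h h1', h2'⟩)
      · exact Or.inr (Or.inr ⟨reach_trans h h1', h2'⟩)
      · exact Or.inr (Or.inl ⟨h1, reach_trans h2 h'⟩)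
      · exact Or.inl (reach_trans h1 (reach_trans (reach_symm (reach_trans h2 h1')) h2'))
      · exact Or.inl (reach_trans h1 h2')
      · exact Or.inr (Or.inr ⟨h1, reach_trans h2 h'⟩)
      · exact Or.inl (reach_trans h1 h2')
      · exact Or.inl (reach_trans h1 (reach_trans (reach_symm (reach_trans h2 h1')) h2'))
  · intro h
    have hm : ∀ {u v : G.V}, G.reach S u v → G.reach (insert e S) u v :=
      fun h' => reach_mono (Finset.subset_insert _ _) h'
    have hab : G.reach (insert e S) (G.fst e) (G.snd e) :=
      reach_of_mem (Finset.mem_insert_self e S)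
    rcases h with h | ⟨h1, h2⟩ | ⟨h1, h2⟩
    · exact hm h
    · exact reach_trans (hm h1) (reach_trans hab (hm h2))
    · exact reach_trans (hm h1) (reach_trans (reach_symm hab) (hm h2))

lemma ncomp_eq_of_reach_iff {S T : Finset G.E}
    (h : ∀ x y, G.reach S x y ↔ G.reach T x y) : G.ncomp S = G.ncomp T :=
  Nat.card_congr (Quotient.congrRight h)

lemma ncomp_insert_of_reach {S : Finset G.E} {e : G.E}
    (h : G.reach S (G.fst e) (G.snd e)) : G.ncomp (insert e S) = G.ncomp S := by
  refine ncomp_eq_of_reach_iff (fun x y => ?_)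
  rw [reach_insert_iff]
  constructor
  · rintro (h' | ⟨h1, h2⟩ | ⟨h1, h2⟩)
    · exact h'
    · exact reach_trans h1 (reach_trans h h2)
    · exact reach_trans h1 (reach_trans (reach_symm h) h2)
  · exact Or.inl


lemma ncomp_empty : G.ncomp (∅ : Finset G.E) = Fintype.card G.V := by
  have hb : Function.Bijective
      (fun v : G.V => Quotient.mk (Relation.EqvGen.setoid (G.step (∅ : Finset G.E))) v) := by
    constructor
    · intro v w h
      exact (reach_empty_iff v w).1 (Quotient.exact h)
    · intro x
      obtain ⟨v, rfl⟩ := Quotient.exists_rep x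
      exact ⟨v, rfl⟩
  have := Nat.card_congr (Equiv.ofBijective _ hb)
  simpa [ncomp, Nat.card_eq_fintype_card] using this.symm

lemma ncomp_insert_of_not_reach {S : Finset G.E} {e : G.E}
    (h : ¬ G.reach S (G.fst e) (G.snd e)) :
    G.ncomp (insert e S) + 1 = G.ncomp S := by
  set a := G.fst e with ha
  set b := G.snd e with hb
  set s1 : Setoid G.V := Relation.EqvGen.setoid (G.step S) with hs1
  set s2 : Setoid G.V := Relation.EqvGen.setoid (G.step (insert e S)) with hs2
  have hmk : ∀ v w : G.V, G.reach S v w → Quotient.mk s1 v = Quotient.mk s1 w :=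
    fun v w hvw => Quotient.sound hvw
  have hex : ∀ v w : G.V, Quotient.mk s1 v = Quotient.mk s1 w → G.reach S v w :=
    fun v w hvw => Quotient.exact hvw
  have key : ∀ v w : G.V, G.reach (insert e S) v w →
      (if G.reach S v b then Quotient.mk s1 a else Quotient.mk s1 v)
        = (if G.reach S w b then Quotient.mk s1 a else Quotient.mk s1 w) := by
    intro v w hvw
    rcases (reach_insert_iff S e v w).1 hvw with h' | ⟨h1, h2⟩ | ⟨h1, h2⟩
    · by_cases hvb : G.reach S v b
      · rw [if_pos hvb, if_pos (reach_trans (reach_symm h') hvb)]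
      · rw [if_neg hvb, if_neg (fun hwb => hvb (reach_trans h' hwb))]
        exact hmk _ _ h'
    · have hvb : ¬ G.reach S v b := fun hvb => h (reach_trans (reach_symm h1) hvb)
      rw [if_neg hvb, if_pos (reach_symm h2)]
      exact hmk _ _ h1
    · have hwb : ¬ G.reach S w b := fun hwb => h (reach_trans h2 hwb)
      rw [if_pos h1, if_neg hwb]
      exact hmk _ _ h2
  let g : Quotient s2 → Quotient s1 :=
    Quotient.lift (fun v => if G.reach S v b then Quotient.mk s1 a else Quotient.mk s1 v) key
  have hgmk : ∀ v : G.V, g (Quotient.mk s2 v)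
      = if G.reach S v b then Quotient.mk s1 a else Quotient.mk s1 v := fun v => rfl
  have hg_ne : ∀ x : Quotient s2, g x ≠ Quotient.mk s1 b := by
    intro x
    obtain ⟨v, rfl⟩ := Quotient.exists_rep x
    rw [hgmk]
    by_cases hvb : G.reach S v b
    · rw [if_pos hvb]; exact fun hc => h (hex _ _ hc)
    · rw [if_neg hvb]; exact fun hc => hvb (hex _ _ hc)
  have hreachab : G.reach (insert e S) a b := reach_of_mem (Finset.mem_insert_self e S)
  have hm : ∀ {u v : G.V}, G.reach S u v → G.reach (insert e S) u v :=
    fun h' => reach_mono (Finset.subset_insert _ _) h'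
  have hbij : Function.Bijective
      (fun x : Quotient s2 => (⟨g x, hg_ne x⟩ : {y : Quotient s1 // y ≠ Quotient.mk s1 b})) := by
    constructor
    · intro x y hxy
      obtain ⟨v, rfl⟩ := Quotient.exists_rep x
      obtain ⟨w, rfl⟩ := Quotient.exists_rep y
      have hxy' : g (Quotient.mk s2 v) = g (Quotient.mk s2 w) := congrArg Subtype.val hxy
      rw [hgmk, hgmk] at hxy'
      apply Quotient.sound
      show G.reach (insert e S) v w
      by_cases hvb : G.reach S v b <;> by_cases hwb : G.reach S w b
      · exact reach_trans (hm hvb) (reach_symm (hm hwb))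
      · rw [if_pos hvb, if_neg hwb] at hxy'
        exact reach_trans (hm hvb) (reach_trans (reach_symm hreachab) (hm (hex _ _ hxy')))
      · rw [if_neg hvb, if_pos hwb] at hxy'
        exact reach_trans (hm (hex _ _ hxy')) (reach_trans hreachab (reach_symm (hm hwb)))
      · rw [if_neg hvb, if_neg hwb] at hxy'
        exact hm (hex _ _ hxy')
    · rintro ⟨y, hy⟩
      obtain ⟨v, rfl⟩ := Quotient.exists_rep y
      refine ⟨Quotient.mk s2 v, ?_⟩
      have hvb : ¬ G.reach S v b := fun hvb => hy (hmk _ _ hvb)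
      apply Subtype.ext
      show g (Quotient.mk s2 v) = Quotient.mk s1 v
      rw [hgmk, if_neg hvb]
  have hcard : Nat.card (Quotient s2)
      = Nat.card {y : Quotient s1 // y ≠ Quotient.mk s1 b} :=
    Nat.card_congr (Equiv.ofBijective _ hbij)
  haveI : Fintype (Quotient s1) := Fintype.ofFinite _
  haveI : Fintype (Quotient s2) := Fintype.ofFinite _
  have h1 : Nat.card {y : Quotient s1 // y ≠ Quotient.mk s1 b}
      = Fintype.card (Quotient s1) - 1 := by
    rw [Nat.card_eq_fintype_card]
    have : Fintype.card {y : Quotient s1 // ¬ (y = Quotient.mk s1 b)}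
        = Fintype.card (Quotient s1) - Fintype.card {y : Quotient s1 // y = Quotient.mk s1 b} :=
      Fintype.card_subtype_compl _
    simp only [Fintype.card_subtype_eq] at this; exact this
  have hpos : 1 ≤ Fintype.card (Quotient s1) :=
    Fintype.card_pos_iff.2 ⟨Quotient.mk s1 b⟩
  show Nat.card (Quotient s2) + 1 = Nat.card (Quotient s1)
  rw [hcard, h1, Nat.card_eq_fintype_card]
  omega

lemma le_card_add_ncomp (S : Finset G.E) : Fintype.card G.V ≤ S.card + G.ncomp S := by
  classical
  induction S using Finset.induction_on with
  | empty => simp [ncomp_empty]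
  | @insert e S he ih =>
    rw [Finset.card_insert_of_notMem he]
    by_cases hre : G.reach S (G.fst e) (G.snd e)
    · rw [ncomp_insert_of_reach hre]; omega
    · have := ncomp_insert_of_not_reach hre
      omega


lemma count_aux {S S' : Finset G.E} {e₀ : G.E} {a b x : G.V}
    (hS : insert e₀ S' = S) (he₀ : e₀ ∉ S') (hfst : G.fst e₀ = a ∨ G.fst e₀ = b)
    (hF : ∀ v w, G.reach S v w ↔ G.reach S' v w ∨
      (G.reach S' v a ∧ G.reach S' b w) ∨ (G.reach S' v b ∧ G.reach S' a w))
    (hnab : ¬ G.reach S' a b) (hax : G.reach S' a x)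
    (IH : ∀ y : G.V, (Finset.univ.filter (fun v => G.reach S' v y)).card
        = (S'.filter (fun e => G.reach S' (G.fst e) y)).card + 1) :
    (Finset.univ.filter (fun v => G.reach S v x)).card
      = (S.filter (fun e => G.reach S (G.fst e) x)).card + 1 := by
  classical
  have hbx : ¬ G.reach S' b x := fun hbx => hnab (reach_trans hax (reach_symm hbx))
  have hvx : ∀ v : G.V, G.reach S v x ↔ G.reach S' v x ∨ G.reach S' v b := by
    intro v
    rw [hF]
    constructor
    · rintro (h | ⟨h1, h2⟩ | ⟨h1, h2⟩)
      · exact Or.inl h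
      · exact absurd h2 hbx
      · exact Or.inr h1
    · rintro (h | h)
      · exact Or.inl h
      · exact Or.inr (Or.inr ⟨h, hax⟩)
  have hdisj : Disjoint (Finset.univ.filter (fun v => G.reach S' v x))
      (Finset.univ.filter (fun v => G.reach S' v b)) := by
    rw [Finset.disjoint_left]
    intro v hv1 hv2
    have h1 := (Finset.mem_filter.1 hv1).2
    have h2 := (Finset.mem_filter.1 hv2).2
    exact hnab (reach_trans hax (reach_trans (reach_symm h1) h2))
  have hvcard : (Finset.univ.filter (fun v => G.reach S v x)).card
      = (Finset.univ.filter (fun v => G.reach S' v x)).card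
        + (Finset.univ.filter (fun v => G.reach S' v b)).card := by
    rw [show Finset.univ.filter (fun v => G.reach S v x)
        = Finset.univ.filter (fun v => G.reach S' v x ∨ G.reach S' v b) from
      Finset.filter_congr (fun v _ => by rw [hvx v]), Finset.filter_or,
      Finset.card_union_of_disjoint hdisj]
  have hedisj : Disjoint (S'.filter (fun e => G.reach S' (G.fst e) x))
      (S'.filter (fun e => G.reach S' (G.fst e) b)) := by
    rw [Finset.disjoint_left]
    intro f hf1 hf2
    have h1 := (Finset.mem_filter.1 hf1).2
    have h2 := (Finset.mem_filter.1 hf2).2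
    exact hnab (reach_trans hax (reach_trans (reach_symm h1) h2))
  have he₀x : G.reach S (G.fst e₀) x := by
    rcases hfst with h | h
    · rw [h, hF]; exact Or.inl hax
    · rw [h, hF]; exact Or.inr (Or.inr ⟨reach_refl _ _, hax⟩)
  have hmemS : ∀ f : G.E, f ∈ S ↔ f = e₀ ∨ f ∈ S' := fun f => by
    rw [← hS, Finset.mem_insert]
  have hsplit : S.filter (fun e => G.reach S (G.fst e) x)
      = insert e₀ (S'.filter (fun e => G.reach S' (G.fst e) x)
        ∪ S'.filter (fun e => G.reach S' (G.fst e) b)) := by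
    ext f
    simp only [Finset.mem_filter, Finset.mem_insert, Finset.mem_union]
    constructor
    · rintro ⟨hfS, hfx⟩
      rcases (hmemS f).1 hfS with rfl | hfS'
      · exact Or.inl rfl
      · refine Or.inr ?_
        rcases (hvx (G.fst f)).1 hfx with h | h
        · exact Or.inl ⟨hfS', h⟩
        · exact Or.inr ⟨hfS', h⟩
    · rintro (rfl | ⟨hfS', hfx⟩ | ⟨hfS', hfx⟩)
      · exact ⟨(hmemS _).2 (Or.inl rfl), he₀x⟩
      · exact ⟨(hmemS _).2 (Or.inr hfS'), (hvx _).2 (Or.inl hfx)⟩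
      · exact ⟨(hmemS _).2 (Or.inr hfS'), (hvx _).2 (Or.inr hfx)⟩
  have hecard : (S.filter (fun e => G.reach S (G.fst e) x)).card
      = ((S'.filter (fun e => G.reach S' (G.fst e) x)).card
        + (S'.filter (fun e => G.reach S' (G.fst e) b)).card) + 1 := by
    rw [hsplit, Finset.card_insert_of_notMem, Finset.card_union_of_disjoint hedisj]
    intro hc
    rcases Finset.mem_union.1 hc with hc | hc
    · exact he₀ (Finset.mem_of_mem_filter _ hc)
    · exact he₀ (Finset.mem_of_mem_filter _ hc)
  rw [hvcard, hecard, IH x, IH b]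
  omega

lemma forest_count (n : ℕ) : ∀ (S : Finset G.E), S.card = n →
    Fintype.card G.V = S.card + G.ncomp S → ∀ x : G.V,
    (Finset.univ.filter (fun v => G.reach S v x)).card
      = (S.filter (fun e => G.reach S (G.fst e) x)).card + 1 := by
  classical
  induction n with
  | zero =>
    intro S hS0 _ x
    have hSe : S = ∅ := Finset.card_eq_zero.1 hS0
    subst hSe
    rw [show Finset.univ.filter (fun v => G.reach (∅ : Finset G.E) v x)
        = Finset.univ.filter (fun v => v = x) from
      Finset.filter_congr (fun v _ => by rw [reach_empty_iff])]
    rw [Finset.filter_empty, Finset.card_empty, Finset.card_eq_one]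
    exact ⟨x, by ext v; simp⟩
  | succ n ih =>
    intro S hcard hforest x
    obtain ⟨e₀, he₀⟩ := Finset.card_pos.1 (by omega : 0 < S.card)
    set S' := S.erase e₀ with hS'def
    have hins : insert e₀ S' = S := Finset.insert_erase he₀
    have he₀' : e₀ ∉ S' := Finset.notMem_erase _ _
    have hcard' : S'.card = n := by
      rw [hS'def, Finset.card_erase_of_mem he₀]; omega
    have hnab : ¬ G.reach S' (G.fst e₀) (G.snd e₀) := by
      intro hr
      have h1 : G.ncomp (insert e₀ S') = G.ncomp S' := ncomp_insert_of_reach hr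
      rw [hins] at h1
      have h2 := le_card_add_ncomp (G := G) S'
      omega
    have hforest' : Fintype.card G.V = S'.card + G.ncomp S' := by
      have := ncomp_insert_of_not_reach hnab
      rw [hins] at this
      omega
    have IH := ih S' hcard' hforest'
    have hF : ∀ v w, G.reach S v w ↔ G.reach S' v w ∨
        (G.reach S' v (G.fst e₀) ∧ G.reach S' (G.snd e₀) w) ∨
        (G.reach S' v (G.snd e₀) ∧ G.reach S' (G.fst e₀) w) := by
      intro v w
      rw [← hins, reach_insert_iff]
    by_cases hax : G.reach S' (G.fst e₀) x
    · exact count_aux hins he₀' (Or.inl rfl) hF hnab hax IH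
    by_cases hbx : G.reach S' (G.snd e₀) x
    · refine count_aux hins he₀' (Or.inr rfl) (fun v w => (hF v w).trans (by tauto))
        (fun hc => hnab (reach_symm hc)) hbx IH
    · -- x's component doesn't contain a or b
      have hvx : ∀ v : G.V, G.reach S v x ↔ G.reach S' v x := by
        intro v
        rw [hF]
        constructor
        · rintro (h | ⟨h1, h2⟩ | ⟨h1, h2⟩)
          · exact h
          · exact absurd h2 hbx
          · exact absurd h2 hax
        · exact Or.inl
      have he₀x : ¬ G.reach S (G.fst e₀) x := fun hc => hax ((hvx _).1 hc)
      have hmemS : ∀ f : G.E, f ∈ S ↔ f = e₀ ∨ f ∈ S' := fun f => by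
        rw [← hins, Finset.mem_insert]
      have hset : S.filter (fun e => G.reach S (G.fst e) x)
          = S'.filter (fun e => G.reach S' (G.fst e) x) := by
        ext f
        simp only [Finset.mem_filter]
        constructor
        · rintro ⟨hfS, hfx⟩
          rcases (hmemS f).1 hfS with rfl | hfS'
          · exact absurd hfx he₀x
          · exact ⟨hfS', (hvx _).1 hfx⟩
        · rintro ⟨hfS', hfx⟩
          exact ⟨(hmemS _).2 (Or.inr hfS'), (hvx _).2 hfx⟩
      rw [show Finset.univ.filter (fun v => G.reach S v x)
          = Finset.univ.filter (fun v => G.reach S' v x) from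
        Finset.filter_congr (fun v _ => by rw [hvx v]), hset]
      exact IH x


lemma exists_not_reach {S : Finset G.E} (h2 : G.ncomp S = 2) (q : G.V) :
    ∃ v : G.V, ¬ G.reach S v q := by
  by_contra hc
  push_neg at hc
  set s1 : Setoid G.V := Relation.EqvGen.setoid (G.step S) with hs1
  have hsub : ∀ x y : Quotient s1, x = y := by
    intro x y
    obtain ⟨v, rfl⟩ := Quotient.exists_rep x
    obtain ⟨w, rfl⟩ := Quotient.exists_rep y
    exact Quotient.sound (reach_trans (hc v) (reach_symm (hc w)))
  haveI : Fintype (Quotient s1) := Fintype.ofFinite _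
  have hle : Fintype.card (Quotient s1) ≤ 1 :=
    Fintype.card_le_one_iff.2 hsub
  have : G.ncomp S = Fintype.card (Quotient s1) := Nat.card_eq_fintype_card
  omega

lemma reach_of_two {S : Finset G.E} (h2 : G.ncomp S = 2) {q v w : G.V}
    (hv : ¬ G.reach S v q) (hw : ¬ G.reach S w q) : G.reach S v w := by
  by_contra hvw
  set s1 : Setoid G.V := Relation.EqvGen.setoid (G.step S) with hs1
  haveI : Fintype (Quotient s1) := Fintype.ofFinite _
  have h3 : 2 < Fintype.card (Quotient s1) := by
    refine Fintype.two_lt_card_iff.2 ⟨Quotient.mk s1 v, Quotient.mk s1 w, Quotient.mk s1 q,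
      ?_, ?_, ?_⟩
    · exact fun hc => hvw (Quotient.exact hc)
    · exact fun hc => hv (Quotient.exact hc)
    · exact fun hc => hw (Quotient.exact hc)
  have : G.ncomp S = Fintype.card (Quotient s1) := Nat.card_eq_fintype_card
  omega

lemma twoForest_count {S : Finset G.E} (hS : G.IsTwoForest S) (q : G.V) :
    (Finset.univ.filter (fun v => ¬ G.reach S v q)).card
      = (S.filter (fun e => ¬ G.reach S (G.fst e) q)).card + 1 := by
  classical
  obtain ⟨hn2, hcard⟩ := hS
  obtain ⟨x₀, hx₀⟩ := exists_not_reach hn2 q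
  have hiff : ∀ v : G.V, ¬ G.reach S v q ↔ G.reach S v x₀ := by
    intro v
    constructor
    · intro hv; exact reach_of_two hn2 hv hx₀
    · intro hv hvq; exact hx₀ (reach_trans (reach_symm hv) hvq)
  have h1 : Finset.univ.filter (fun v => ¬ G.reach S v q)
      = Finset.univ.filter (fun v => G.reach S v x₀) :=
    Finset.filter_congr (fun v _ => by rw [hiff v])
  have h2 : S.filter (fun e => ¬ G.reach S (G.fst e) q)
      = S.filter (fun e => G.reach S (G.fst e) x₀) :=
    Finset.filter_congr (fun f _ => by rw [hiff (G.fst f)])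
  rw [h1, h2]
  exact forest_count S.card S rfl (by omega) x₀


lemma bij_card (q : G.V) :
    ((Finset.univ : Finset (G.E × Finset G.E)).filter (fun p =>
      G.IsThreeForest p.2 ∧ ¬ G.reach p.2 (G.fst p.1) (G.snd p.1) ∧
        ¬ G.reach p.2 (G.fst p.1) q ∧ ¬ G.reach p.2 (G.snd p.1) q)).card
    = ((Finset.univ : Finset (G.E × Finset G.E)).filter (fun p =>
      G.IsTwoForest p.2 ∧ p.1 ∈ p.2 ∧ ¬ G.reach p.2 (G.fst p.1) q)).card := by
  classical
  refine Finset.card_bij' (fun p _ => (p.1, insert p.1 p.2))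
    (fun p _ => (p.1, p.2.erase p.1)) ?_ ?_ ?_ ?_
  · rintro ⟨e, T⟩ hp
    simp only [Finset.mem_filter, Finset.mem_univ, true_and] at hp ⊢
    obtain ⟨⟨hn3, hc3⟩, hab, haq, hbq⟩ := hp
    have hnotmem : e ∉ T := fun hm => hab (reach_of_mem hm)
    refine ⟨⟨?_, ?_⟩, Finset.mem_insert_self _ _, ?_⟩
    · have := ncomp_insert_of_not_reach hab; omega
    · rw [Finset.card_insert_of_notMem hnotmem]; omega
    · rw [reach_insert_iff]
      rintro (h | ⟨h1, h2⟩ | ⟨h1, h2⟩)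
      · exact haq h
      · exact hbq h2
      · exact hab h1
  · rintro ⟨e, S⟩ hp
    simp only [Finset.mem_filter, Finset.mem_univ, true_and] at hp ⊢
    obtain ⟨⟨hn2, hc2⟩, hmem, haq⟩ := hp
    have hins : insert e (S.erase e) = S := Finset.insert_erase hmem
    have hpos : 1 ≤ S.card := Finset.card_pos.2 ⟨e, hmem⟩
    have hnab : ¬ G.reach (S.erase e) (G.fst e) (G.snd e) := by
      intro hr
      have h1 := ncomp_insert_of_reach hr
      rw [hins] at h1
      have h2 := le_card_add_ncomp (G := G) (S.erase e)
      rw [Finset.card_erase_of_mem hmem] at h2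
      omega
    have hnc : G.ncomp (S.erase e) = 3 := by
      have := ncomp_insert_of_not_reach hnab
      rw [hins] at this
      omega
    refine ⟨⟨hnc, by rw [Finset.card_erase_of_mem hmem]; omega⟩, hnab, ?_, ?_⟩
    · exact fun h => haq (reach_mono (Finset.erase_subset _ _) h)
    · exact fun h => haq (reach_trans (reach_of_mem hmem)
        (reach_mono (Finset.erase_subset _ _) h))
  · rintro ⟨e, T⟩ hp
    simp only [Finset.mem_filter, Finset.mem_univ, true_and] at hp
    have hnotmem : e ∉ T := fun hm => hp.2.1 (reach_of_mem hm)
    simp only [Prod.mk.injEq]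
    exact ⟨trivial, Finset.erase_insert hnotmem⟩
  · rintro ⟨e, S⟩ hp
    simp only [Finset.mem_filter, Finset.mem_univ, true_and] at hp
    simp only [Prod.mk.injEq]
    exact ⟨trivial, Finset.insert_erase hp.2.1⟩

lemma nat_identity (q : G.V) :
    (∑ v : G.V, G.kappa2Sep v q)
      = (∑ e : G.E, G.kappa3Sep (G.fst e) (G.snd e) q) + G.kappa2 := by
  classical
  have hsub : ∀ (p : Finset G.E → Prop),
      Nat.card {S : Finset G.E // p S} = (Finset.univ.filter p).card := by
    intro p
    rw [Nat.card_eq_fintype_card, Fintype.card_subtype]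
  -- LHS
  have h1 : (∑ v : G.V, G.kappa2Sep v q)
      = ∑ S ∈ Finset.univ.filter (fun S : Finset G.E => G.IsTwoForest S),
          (Finset.univ.filter (fun v => ¬ G.reach S v q)).card := by
    calc (∑ v : G.V, G.kappa2Sep v q)
        = ∑ v : G.V, ∑ S : Finset G.E,
            (if G.IsTwoForest S ∧ ¬ G.reach S v q then 1 else 0) := by
          refine Finset.sum_congr rfl (fun v _ => ?_)
          rw [kappa2Sep, hsub, Finset.card_filter]
          exact Finset.sum_congr rfl (fun S _ => by
            by_cases h : G.IsTwoForest S ∧ ¬G.reach S v q <;> simp [h])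
      _ = ∑ S : Finset G.E, ∑ v : G.V,
            (if G.IsTwoForest S ∧ ¬ G.reach S v q then 1 else 0) := Finset.sum_comm
      _ = ∑ S : Finset G.E, (if G.IsTwoForest S then
            (Finset.univ.filter (fun v => ¬ G.reach S v q)).card else 0) := by
          refine Finset.sum_congr rfl (fun S _ => ?_)
          by_cases h2F : G.IsTwoForest S
          · rw [if_pos h2F, Finset.card_filter]
            exact Finset.sum_congr rfl (fun v _ => if_congr (and_iff_right h2F) rfl rfl)
          · rw [if_neg h2F]
            exact Finset.sum_eq_zero (fun v _ => if_neg (fun hc => h2F hc.1))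
      _ = _ := (Finset.sum_filter _ _).symm
  -- middle sum
  have h2 : (∑ e : G.E, G.kappa3Sep (G.fst e) (G.snd e) q)
      = ((Finset.univ : Finset (G.E × Finset G.E)).filter (fun p =>
          G.IsThreeForest p.2 ∧ ¬ G.reach p.2 (G.fst p.1) (G.snd p.1) ∧
            ¬ G.reach p.2 (G.fst p.1) q ∧ ¬ G.reach p.2 (G.snd p.1) q)).card := by
    rw [Finset.card_filter, ← Finset.univ_product_univ, Finset.sum_product]
    refine Finset.sum_congr rfl (fun e _ => ?_)
    rw [kappa3Sep, hsub, Finset.card_filter]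
    exact Finset.sum_congr rfl (fun S _ => by
      by_cases h : G.IsThreeForest S ∧ ¬G.reach S (G.fst e) (G.snd e) ∧
        ¬G.reach S (G.fst e) q ∧ ¬G.reach S (G.snd e) q <;> simp [h])
  have h3 : ((Finset.univ : Finset (G.E × Finset G.E)).filter (fun p =>
        G.IsTwoForest p.2 ∧ p.1 ∈ p.2 ∧ ¬ G.reach p.2 (G.fst p.1) q)).card
      = ∑ S ∈ Finset.univ.filter (fun S : Finset G.E => G.IsTwoForest S),
          (S.filter (fun e => ¬ G.reach S (G.fst e) q)).card := by
    rw [Finset.card_filter, ← Finset.univ_product_univ, Finset.sum_product, Finset.sum_comm,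
      Finset.sum_filter]
    refine Finset.sum_congr rfl (fun S _ => ?_)
    by_cases h2F : G.IsTwoForest S
    · rw [if_pos h2F]
      have : S.filter (fun e => ¬ G.reach S (G.fst e) q)
          = Finset.univ.filter (fun e => e ∈ S ∧ ¬ G.reach S (G.fst e) q) := by
        ext f
        simp only [Finset.mem_filter, Finset.mem_univ, true_and]
      rw [this, Finset.card_filter]
      exact Finset.sum_congr rfl (fun e _ => if_congr (and_iff_right h2F) rfl rfl)
    · rw [if_neg h2F]
      exact Finset.sum_eq_zero (fun e _ => if_neg (fun hc => h2F hc.1))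
  have h4 : G.kappa2
      = ∑ S ∈ Finset.univ.filter (fun S : Finset G.E => G.IsTwoForest S), 1 := by
    rw [kappa2, hsub, Finset.card_eq_sum_ones]
  rw [h1, h2, bij_card, h3, h4, ← Finset.sum_add_distrib]
  refine Finset.sum_congr rfl (fun S hS => ?_)
  exact twoForest_count (Finset.mem_filter.1 hS).2 q

end Multigraph

theorem two_forest_count_identity (G : Multigraph) (hG : G.IsConnected) (q : G.V) :
    (G.kappa2 : ℤ) =
      (∑ v : G.V, (G.kappa2Sep v q : ℤ)) -
      (∑ e : G.E, (G.kappa3Sep (G.fst e) (G.snd e) q : ℤ)) := by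
  have key := Multigraph.nat_identity (G := G) q
  have hcast := congrArg (fun n : ℕ => (n : ℤ)) key
  push_cast at hcast
  linarith [hcast]
end

section
/- For vertices x, y, q of a connected graph G, r(x,q) + r(y,q) = r(x,y) + 2·j_q(x,y), where j_q(x,y) = κ₂(xy|q)/κ(G). -/
open scoped Classical
open Matrix

namespace Multigraph

variable (G : Multigraph)

lemma card_sub (p : Finset G.E → Prop) :
    Nat.card {S : Finset G.E // p S} = ∑ S : Finset G.E, if p S then 1 else 0 := by
  classical
  rw [Nat.card_eq_fintype_card, Fintype.card_subtype, Finset.card_filter]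

lemma reach_total (S : Finset G.E) (h2 : G.ncomp S = 2) (x y q : G.V) :
    G.reach S x y ∨ G.reach S x q ∨ G.reach S y q := by
  by_contra hc
  push_neg at hc
  obtain ⟨h1, h2', h3⟩ := hc
  classical
  let st := Relation.EqvGen.setoid (G.step S)
  have hcard : Nat.card (Quotient st) = 2 := h2
  let f : Fin 3 → Quotient st := ![Quotient.mk st x, Quotient.mk st y, Quotient.mk st q]
  have hinj : Function.Injective f := by
    intro i j hij
    fin_cases i <;> fin_cases j <;> simp_all [f, Quotient.eq] <;>
      first
      | exact h1 hij
      | exact h2' hij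
      | exact h3 hij
      | exact h1 (Relation.EqvGen.symm _ _ hij)
      | exact h2' (Relation.EqvGen.symm _ _ hij)
      | exact h3 (Relation.EqvGen.symm _ _ hij)
  have := Fintype.card_le_of_injective f hinj
  rw [Nat.card_eq_fintype_card] at hcard
  simp [hcard] at this

lemma key (x y q : G.V) :
    G.kappa2Sep x q + G.kappa2Sep y q = G.kappa2Sep x y + 2 * G.kappa2Tog x y q := by
  classical
  unfold kappa2Sep kappa2Tog
  rw [card_sub, card_sub, card_sub, card_sub, ← Finset.sum_add_distrib, Finset.mul_sum,
    ← Finset.sum_add_distrib]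
  apply Finset.sum_congr rfl
  intro S _
  by_cases hp : G.IsTwoForest S
  · have htot := G.reach_total S hp.1 x y q
    by_cases h1 : G.reach S x y <;> by_cases h2 : G.reach S x q <;>
      by_cases h3 : G.reach S y q <;> simp_all
    · exact h3 (Relation.EqvGen.trans _ _ _ (Relation.EqvGen.symm _ _ h1) h2)
    · exact h2 (Relation.EqvGen.trans _ _ _ h1 h3)
    · exact h1 (Relation.EqvGen.trans _ _ _ h2 (Relation.EqvGen.symm _ _ h3))
  · simp [hp]

end Multigraph

theorem resistance_gromov_product (G : Multigraph) (hG : G.IsConnected) (x y q : G.V) :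
    G.res x q + G.res y q = G.res x y + 2 * G.jfun q x y := by
  have h : ((G.kappa2Sep x q : ℝ) + G.kappa2Sep y q)
      = (G.kappa2Sep x y : ℝ) + 2 * G.kappa2Tog x y q := by
    exact_mod_cast congrArg (Nat.cast : ℕ → ℝ) (G.key x y q)
  simp only [Multigraph.res, Multigraph.jfun, ← mul_div_assoc, ← add_div]
  rw [h]
end
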